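/- Let a ≠ -1 be a non-square integer, let h_a be the largest m ∈ ℕ such that a is an m-th power, and let k be a positive squarefree integer. Set k' = k / gcd(k, h_a). Then a^{1/k} lies in the field ℚ(a^{1/k'}, ζ_k), i.e., ℚ(a^{1/k}, ζ_k) = ℚ(a^{1/k'}, ζ_k). -/

import Mathlib

/-! Write `a = b ^ h`, `d = gcd(k, h)` and `k = d * k'`. Then `(a ^ {1/k'}) ^ k = b ^ (h * d)` and
`(a ^ {1/k}) ^ k = b ^ h`. As `k` is squarefree, `h` and `k'` are coprime, so `gcd(h * d, k) = d`
divides `h`, and Bezout gives `h * d * x + k * y = h`. Hence `b ^ y * (a ^ {1/k'}) ^ x` is a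
`k`-th root of `a`, equal to `a ^ {1/k}` up to a power of `ζ_k`. Conversely `a ^ {1/k'}` is
`(a ^ {1/k}) ^ d` up to a power of `ζ_k`. -/

open IntermediateField

lemma Nat.exists_mul_gcd_mul_add_mul_eq_of_squarefree {k : ℕ} (hk : Squarefree k) {m : ℕ}
    (hm : m ≠ 0) : ∃ x y : ℤ, (m * k.gcd m : ℕ) * x + k * y = m := by
  set d := k.gcd m
  have hkd : k = d * (k / d) := (Nat.mul_div_cancel' (Nat.gcd_dvd_left k m)).symm
  have hgcd : (m * d).gcd k = d := by
    rw [hkd, mul_comm m, Nat.gcd_mul_left, (Nat.coprime_div_gcd_of_squarefree hk hm).symm,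
      mul_one]
  obtain ⟨x, y, hxy⟩ := Int.gcd_dvd_iff (n := m).mp <| by
    rw [Int.gcd_natCast_natCast, hgcd]
    exact Nat.gcd_dvd_right k m
  exact ⟨x, y, hxy.symm⟩

section

variable {K L : Type*} [Field K] [Field L] [Algebra K L] {S : IntermediateField K L}
  {k : ℕ} [NeZero k] {ζ : L}

lemma IsPrimitiveRoot.mem_of_pow_eq_pow (hζ : IsPrimitiveRoot ζ k) (hζS : ζ ∈ S) {α γ : L}
    (hγS : γ ∈ S) (hαγ : α ^ k = γ ^ k) : α ∈ S := by
  rcases eq_or_ne γ 0 with rfl | hγ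
  · rw [zero_pow (NeZero.ne k), pow_eq_zero_iff (NeZero.ne k)] at hαγ
    exact hαγ ▸ zero_mem S
  obtain ⟨i, -, hi⟩ := hζ.eq_pow_of_pow_eq_one (ξ := α / γ) <| by
    rw [div_pow, hαγ, div_self (pow_ne_zero k hγ)]
  rw [← div_mul_cancel₀ α hγ, ← hi]
  exact mul_mem (pow_mem hζS i) hγS

lemma IsPrimitiveRoot.mem_adjoin_of_pow_eq_pow_pow (hζ : IsPrimitiveRoot ζ k) {α β : L}
    {e : ℕ} (h : β ^ k = (α ^ e) ^ k) : β ∈ K⟮α, ζ⟯ :=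
  hζ.mem_of_pow_eq_pow (mem_adjoin_pair_right K α ζ) (pow_mem (mem_adjoin_pair_left K α ζ) e) h

lemma IsPrimitiveRoot.mem_of_pow_eq_pow_of_bezout (hζ : IsPrimitiveRoot ζ k) (hζS : ζ ∈ S)
    {α β b : L} (hβS : β ∈ S) (hbS : b ∈ S) (hb : b ≠ 0) {m n : ℕ} {x y : ℤ}
    (hxy : n * x + k * y = m) (hα : α ^ k = b ^ m) (hβ : β ^ k = b ^ n) : α ∈ S := by
  refine hζ.mem_of_pow_eq_pow hζS (γ := b ^ y * β ^ x)
    (mul_mem (zpow_mem hbS y) (zpow_mem hβS x)) ?_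
  calc α ^ k = b ^ (n * x + k * y) := by rw [hxy, zpow_natCast, hα]
    _ = ((b ^ n) ^ x * (b ^ y) ^ k : L) := by
      rw [zpow_add₀ hb, zpow_mul, zpow_natCast, mul_comm (k : ℤ), zpow_mul, zpow_natCast]
    _ = (b ^ y * β ^ x) ^ k := by
      rw [← hβ, mul_pow, mul_comm ((b ^ y) ^ k), ← zpow_natCast β, ← zpow_natCast (β ^ x),
        ← zpow_mul, ← zpow_mul, mul_comm (k : ℤ)]

end

theorem stmt_1_general (a : ℤ) (hsq : ¬ IsSquare a)
    (h : ℕ) (hpow : ∃ b : ℤ, b ^ h = a)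
    (k : ℕ) (hksf : Squarefree k)
    (k' : ℕ) (hk' : k' = k / Nat.gcd k h)
    (ζ α β : ℂ) (hζ : IsPrimitiveRoot ζ k)
    (hα : α ^ k = (a : ℂ)) (hβ : β ^ k' = (a : ℂ)) :
    IntermediateField.adjoin ℚ {α, ζ} = IntermediateField.adjoin ℚ {β, ζ} := by
  have : NeZero k := ⟨hksf.ne_zero⟩
  obtain ⟨b, rfl⟩ := hpow
  have hh : h ≠ 0 := by
    rintro rfl
    exact hsq ⟨1, by simp⟩
  have hb : (b : ℂ) ≠ 0 := by exact_mod_cast fun hb ↦ hsq ⟨0, by simp [hb, hh]⟩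
  obtain ⟨x, y, hxy⟩ := Nat.exists_mul_gcd_mul_add_mul_eq_of_squarefree hksf hh
  set d := k.gcd h
  have hkk' : k = k' * d := hk' ▸ (Nat.div_mul_cancel (Nat.gcd_dvd_left k h)).symm
  push_cast at hα hβ
  have hβk : β ^ k = (b : ℂ) ^ (h * d) := by rw [hkk', pow_mul, hβ, ← pow_mul]
  apply le_antisymm <;> rw [adjoin_le_iff, Set.insert_subset_iff, Set.singleton_subset_iff]
  · exact ⟨hζ.mem_of_pow_eq_pow_of_bezout (mem_adjoin_pair_right ℚ β ζ)
      (mem_adjoin_pair_left ℚ β ζ) (intCast_mem _ b) hb hxy hα hβk,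
      mem_adjoin_pair_right ℚ β ζ⟩
  · refine ⟨hζ.mem_adjoin_of_pow_eq_pow_pow (e := d) ?_, mem_adjoin_pair_right ℚ α ζ⟩
    rw [hβk, pow_mul, ← hα, ← pow_mul, ← pow_mul, mul_comm]

/-- Let `a ≠ -1` be a non-square integer, `h` the largest natural number such that `a`
is an `h`-th power, `k` a positive squarefree integer, and `k' = k / gcd(k, h)`.
Then for any primitive `k`-th root of unity `ζ` and any complex `k`-th root `α` and
`k'`-th root `β` of `a`, we have `ℚ(α, ζ) = ℚ(β, ζ)`, i.e. `a^{1/k}` lies in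
`ℚ(a^{1/k'}, ζ_k)`. -/
theorem stmt_1 (a : ℤ) (ha : a ≠ -1) (hsq : ¬ IsSquare a)
    (h : ℕ) (hpow : ∃ b : ℤ, b ^ h = a) (hmax : ∀ m : ℕ, (∃ b : ℤ, b ^ m = a) → m ≤ h)
    (k : ℕ) (hk : 0 < k) (hksf : Squarefree k)
    (k' : ℕ) (hk' : k' = k / Nat.gcd k h)
    (ζ α β : ℂ) (hζ : IsPrimitiveRoot ζ k)
    (hα : α ^ k = (a : ℂ)) (hβ : β ^ k' = (a : ℂ)) :
    IntermediateField.adjoin ℚ {α, ζ} = IntermediateField.adjoin ℚ {β, ζ} :=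
  stmt_1_general a hsq h hpow k hksf k' hk' ζ α β hζ hα hβ
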